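/- arXiv:1002.4737 — 3 statements merged into one kernel-verified Lean document; each statement's English description precedes it below -/
import Mathlib

section
/- Let f : (0,∞) → (0,∞) be continuous, positive, locally Lipschitz on (0,∞), with ∫₁^∞ ds/f(s) = ∞. For a > 0 let φ_a be the solution of φ' + f(φ) = 0 on (0,∞) with φ(0) = a. Then for every fixed t > 0, φ_a(t) → ∞ as a → ∞. -/
/-!
With `F x = ∫₁ˣ ds / f(s)`, every solution satisfies `(F ∘ φ_a)' = -1`, so `F (φ_a t) = F a - t`.
Divergence of the integral makes the increasing function `F` tend to `∞`, hence so does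
`F (φ_a t)` as `a → ∞`, and monotonicity of `F` forces `φ_a t → ∞`.
-/

open Real MeasureTheory Filter Set

section PositivePrimitive

variable {g : ℝ → ℝ}

lemma intervalIntegrable_of_continuousOn_Ioi (hg : ContinuousOn g (Ioi 0)) {x y : ℝ}
    (hx : 0 < x) (hy : 0 < y) : IntervalIntegrable g volume x y :=
  (hg.mono fun _ hu => lt_of_lt_of_le (lt_min hx hy) hu.1).intervalIntegrable

lemma hasDerivAt_integral_of_continuousOn_Ioi (hg : ContinuousOn g (Ioi 0)) {x : ℝ}
    (hx : 0 < x) : HasDerivAt (fun x => ∫ s in (1:ℝ)..x, g s) (g x) x :=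
  intervalIntegral.integral_hasDerivAt_right
    (intervalIntegrable_of_continuousOn_Ioi hg one_pos hx)
    (hg.stronglyMeasurableAtFilter isOpen_Ioi x hx) (hg.continuousAt (Ioi_mem_nhds hx))

lemma monotoneOn_integral_of_nonneg (hg : ContinuousOn g (Ioi 0))
    (hg0 : ∀ s ∈ Ioi (0:ℝ), 0 ≤ g s) :
    MonotoneOn (fun x => ∫ s in (1:ℝ)..x, g s) (Ioi 0) := by
  intro x hx y hy hxy
  have hsplit := intervalIntegral.integral_add_adjacent_intervals
    (intervalIntegrable_of_continuousOn_Ioi hg one_pos hx)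
    (intervalIntegrable_of_continuousOn_Ioi hg hx hy)
  have hnonneg : 0 ≤ ∫ s in x..y, g s :=
    intervalIntegral.integral_nonneg hxy fun u hu => hg0 u (lt_of_lt_of_le hx hu.1)
  simp only
  linarith

lemma tendsto_integral_atTop_of_not_integrableOn (hg : ContinuousOn g (Ioi 0))
    (hg0 : ∀ s ∈ Ioi (0:ℝ), 0 ≤ g s) (hdiv : ¬ IntegrableOn g (Ioi 1)) :
    Tendsto (fun x => ∫ s in (1:ℝ)..x, g s) atTop atTop := by
  set F := fun x => ∫ s in (1:ℝ)..x, g s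
  have hmax : Tendsto (fun x : ℝ => max x 1) atTop atTop :=
    tendsto_atTop_mono (fun x => le_max_left x 1) tendsto_id
  have hF_eq : (fun x => F (max x 1)) =ᶠ[atTop] F :=
    (eventually_ge_atTop 1).mono fun x hx => by simp only [max_eq_left hx]
  have hmono : Monotone fun x => F (max x 1) := fun x y hxy =>
    monotoneOn_integral_of_nonneg hg hg0 (lt_of_lt_of_le one_pos (le_max_right x 1))
      (lt_of_lt_of_le one_pos (le_max_right y 1)) (max_le_max_right 1 hxy)
  rcases tendsto_atTop_of_monotone hmono with htop | ⟨l, hl⟩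
  · exact htop.congr' hF_eq
  · have hnorm : ∀ x, F (max x 1) = ∫ s in (1:ℝ)..max x 1, ‖g s‖ := fun x =>
      intervalIntegral.integral_congr fun u hu => by
        rw [uIcc_of_le (le_max_right x 1)] at hu
        exact (Real.norm_of_nonneg (hg0 u (lt_of_lt_of_le one_pos hu.1))).symm
    have hfi : ∀ x, IntegrableOn g (Ioc 1 (max x 1)) := fun x =>
      (intervalIntegrable_of_continuousOn_Ioi hg one_pos
        (lt_of_lt_of_le one_pos (le_max_right x 1))).1
    exact absurd (integrableOn_Ioi_of_intervalIntegral_norm_tendsto l 1 hfi hmax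
      (hl.congr hnorm)) hdiv

end PositivePrimitive

/-- Separation of variables for `u' = -f(u)`. -/
lemma primitive_comp_solution_eq_sub {f G u : ℝ → ℝ} (hpos : ∀ s ∈ Ioi (0:ℝ), 0 < f s)
    (hG : ∀ x ∈ Ioi (0:ℝ), HasDerivAt G (1 / f x) x)
    (hu_pos : ∀ t, 0 ≤ t → 0 < u t) (hu : ∀ t, 0 ≤ t → HasDerivAt u (-f (u t)) t)
    {t : ℝ} (ht : 0 ≤ t) : G (u t) = G (u 0) - t := by
  have hderiv : ∀ s, 0 ≤ s → HasDerivAt (fun s => G (u s) + s) 0 s := by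
    intro s hs
    have h := ((hG _ (hu_pos s hs)).comp s (hu s hs)).add (hasDerivAt_id s)
    rwa [one_div, mul_neg, inv_mul_cancel₀ (hpos _ (hu_pos s hs)).ne', neg_add_cancel] at h
  have hconst := constant_of_has_deriv_right_zero
    (fun s hs => (hderiv s hs.1).continuousAt.continuousWithinAt)
    (fun s hs => (hderiv s hs.1).hasDerivWithinAt) t ⟨ht, le_rfl⟩
  simp only [add_zero] at hconst
  linarith

lemma tendsto_atTop_of_monotoneOn_Ioi_comp {α : Type*} {l : Filter α} {F : ℝ → ℝ} {u : α → ℝ}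
    (hF : MonotoneOn F (Ioi 0)) (hu : ∀ᶠ a in l, 0 < u a) (hFu : Tendsto (F ∘ u) l atTop) :
    Tendsto u l atTop := by
  refine tendsto_atTop.2 fun M => ?_
  have hM : 0 < max M 1 := lt_of_lt_of_le one_pos (le_max_right M 1)
  filter_upwards [hu, hFu.eventually_gt_atTop (F (max M 1))] with a ha hFa
  by_contra hlt
  exact (hF ha hM (le_max_of_le_left (not_le.1 hlt).le)).not_gt hFa

theorem flat_solutions_tendsto_infty_general (f : ℝ → ℝ)
    (hcont : ContinuousOn f (Ioi 0))
    (hpos : ∀ s ∈ Ioi (0:ℝ), 0 < f s)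
    (hdiv : ¬ IntegrableOn (fun s => 1 / f s) (Ioi 1))
    (φ : ℝ → ℝ → ℝ)
    (hφ0 : ∀ a : ℝ, 0 < a → φ a 0 = a)
    (hφpos : ∀ a : ℝ, 0 < a → ∀ t : ℝ, 0 ≤ t → 0 < φ a t)
    (hφode : ∀ a : ℝ, 0 < a → ∀ t : ℝ, 0 ≤ t → HasDerivAt (φ a) (-(f (φ a t))) t) :
    ∀ t : ℝ, 0 < t → Tendsto (fun a => φ a t) atTop atTop := by
  intro t ht
  set F := fun x => ∫ s in (1:ℝ)..x, 1 / f s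
  have hg : ContinuousOn (fun s => 1 / f s) (Ioi 0) :=
    continuousOn_const.div hcont fun s hs => (hpos s hs).ne'
  have hg0 : ∀ s ∈ Ioi (0:ℝ), 0 ≤ 1 / f s := fun s hs => (one_div_pos.2 (hpos s hs)).le
  have hsep : ∀ᶠ a in atTop, F a - t = F (φ a t) :=
    (eventually_gt_atTop 0).mono fun a ha => by
      rw [primitive_comp_solution_eq_sub (G := F) hpos
        (fun x hx => hasDerivAt_integral_of_continuousOn_Ioi hg hx)
        (hφpos a ha) (hφode a ha) ht.le, hφ0 a ha]
  refine tendsto_atTop_of_monotoneOn_Ioi_comp (monotoneOn_integral_of_nonneg hg hg0)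
    ((eventually_gt_atTop 0).mono fun a ha => hφpos a ha t ht.le) ?_
  exact (tendsto_atTop_add_const_right _ (-t)
    (tendsto_integral_atTop_of_not_integrableOn hg hg0 hdiv)).congr' hsep

theorem flat_solutions_tendsto_infty (f : ℝ → ℝ)
    (hcont : ContinuousOn f (Ioi 0))
    (hpos : ∀ s ∈ Ioi (0:ℝ), 0 < f s)
    (hlip : ∀ s ∈ Ioi (0:ℝ), ∃ ε > 0, ∃ K : NNReal,
      LipschitzOnWith K f (Metric.ball s ε ∩ Ioi 0))
    (hdiv : ¬ IntegrableOn (fun s => 1 / f s) (Ioi 1))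
    (φ : ℝ → ℝ → ℝ)
    (hφ0 : ∀ a : ℝ, 0 < a → φ a 0 = a)
    (hφpos : ∀ a : ℝ, 0 < a → ∀ t : ℝ, 0 ≤ t → 0 < φ a t)
    (hφode : ∀ a : ℝ, 0 < a → ∀ t : ℝ, 0 ≤ t → HasDerivAt (φ a) (-(f (φ a t))) t) :
    ∀ t : ℝ, 0 < t → Tendsto (fun a => φ a t) atTop atTop :=
  flat_solutions_tendsto_infty_general f hcont hpos hdiv φ hφ0 hφpos hφode
end

section
/- Let N ≥ 1 and let h : (0,∞) → [0,∞) be nondecreasing, and suppose ∫₁^∞ s^{-2-2/N} f(s) ds < ∞ where f(s) = s·h(s). Then for every k > 0, ∫₀^1 h(k C* t^{-N/2}) dt < ∞, where C* = (4π)^{-N/2}. -/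
open Real MeasureTheory Filter Set

theorem weak_singularity_implies_time_integrability (N : ℕ) (hN : 1 ≤ N)
    (f : ℝ → ℝ) (hf : ∀ s ∈ Ioi (0:ℝ), 0 ≤ f s)
    (hmono : MonotoneOn (fun s => f s / s) (Ioi 0))
    (hint : IntegrableOn (fun s => s ^ (-2 - 2/(N:ℝ)) * f s) (Ioi 1)) :
    ∀ k : ℝ, 0 < k → IntegrableOn
      (fun t => f (k * (4 * π) ^ (-(N:ℝ)/2) * t ^ (-(N:ℝ)/2))
        / (k * (4 * π) ^ (-(N:ℝ)/2) * t ^ (-(N:ℝ)/2)))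
      (Ioc 0 1) := by
  intro k hk
  have hNpos : (0:ℝ) < N := by exact_mod_cast hN
  set e : ℝ := -(N:ℝ)/2 with he
  set a : ℝ := k * (4 * π) ^ e with haa
  have ha : 0 < a := mul_pos hk (rpow_pos_of_pos (by positivity) e)
  set q : ℝ := 2 / N with hqq
  have hq : 0 < q := by positivity
  have hqe : q * e = -1 := by rw [hqq, he]; field_simp
  set φ : ℝ → ℝ := fun s => a ^ q * s ^ (-q) with hφ
  -- key identity: for s > 0, a * (φ s) ^ e = s
  have key : ∀ s : ℝ, 0 < s → a * (φ s) ^ e = s := by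
    intro s hs
    show a * (a ^ q * s ^ (-q)) ^ e = s
    rw [Real.mul_rpow (rpow_nonneg ha.le _) (rpow_nonneg hs.le _)]
    rw [← Real.rpow_mul ha.le, ← Real.rpow_mul hs.le, hqe]
    have : -q * e = 1 := by rw [neg_mul, hqe]; norm_num
    rw [this, Real.rpow_one, Real.rpow_neg_one]
    field_simp
  -- image identity
  have himg : Ioc (0:ℝ) 1 = φ '' Ici a := by
    ext t
    constructor
    · rintro ⟨ht0, ht1⟩
      refine ⟨a * t ^ e, ?_, ?_⟩
      · have h1 : (1:ℝ) ≤ t ^ e :=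
          Real.one_le_rpow_of_pos_of_le_one_of_nonpos ht0 ht1
            (by rw [he]; nlinarith)
        calc a = a * 1 := (mul_one a).symm
          _ ≤ a * t ^ e := by nlinarith
      · -- φ (a * t ^ e) = t
        have hte : 0 < t ^ e := rpow_pos_of_pos ht0 e
        show a ^ q * (a * t ^ e) ^ (-q) = t
        rw [Real.mul_rpow ha.le hte.le, ← Real.rpow_mul ht0.le]
        have hqe' : e * -q = 1 := by rw [mul_comm, neg_mul, hqe]; norm_num
        rw [hqe', Real.rpow_one, ← mul_assoc, ← Real.rpow_add ha,
          add_neg_cancel, Real.rpow_zero, one_mul]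
    · rintro ⟨s, (hs : a ≤ s), rfl⟩
      have hs0 : 0 < s := lt_of_lt_of_le ha hs
      constructor
      · exact mul_pos (rpow_pos_of_pos ha q) (rpow_pos_of_pos hs0 _)
      · have h1 : s ^ (-q) ≤ a ^ (-q) :=
          Real.rpow_le_rpow_of_nonpos ha hs (by linarith)
        calc a ^ q * s ^ (-q) ≤ a ^ q * a ^ (-q) := by
              have := rpow_pos_of_pos ha q; nlinarith
          _ = 1 := by rw [← Real.rpow_add ha, add_neg_cancel, Real.rpow_zero]
  -- change of variables
  rw [himg, integrableOn_image_iff_integrableOn_abs_deriv_smul measurableSet_Ici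
    (f' := fun s => a ^ q * (-q * s ^ (-q - 1)))
    (fun s hs => (((Real.hasDerivAt_rpow_const
      (Or.inl (lt_of_lt_of_le ha hs).ne')).const_mul (a ^ q))).hasDerivWithinAt)
    (fun s1 h1 s2 h2 heq => by
      have := congrArg (fun t => a * t ^ e) heq
      exact (key s1 (lt_of_lt_of_le ha h1)).symm.trans (this.trans (key s2 (lt_of_lt_of_le ha h2))))]
  -- now prove integrability of the transformed function
  have hF : IntegrableOn (fun s => s ^ (-2 - 2/(N:ℝ)) * f s) (Ici a) := by
    rw [integrableOn_Ici_iff_integrableOn_Ioi]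
    rcases le_or_gt 1 a with h1a | ha1
    · exact hint.mono_set (Ioi_subset_Ioi h1a)
    · rw [← Set.Ioc_union_Ioi_eq_Ioi ha1.le]
      refine IntegrableOn.union ?_ hint
      -- bounded part on Ioc a 1
      have hsub : Ioc a 1 ⊆ Ioi (0:ℝ) := fun x hx => lt_of_lt_of_le ha hx.1.le
      have hh : AEMeasurable (fun s => f s / s) (volume.restrict (Ioc a 1)) :=
        aemeasurable_restrict_of_monotoneOn measurableSet_Ioc (hmono.mono hsub)
      have hG : AEMeasurable (fun s => s ^ (-2 - 2/(N:ℝ)) * s * (f s / s))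
          (volume.restrict (Ioc a 1)) := by
        refine AEMeasurable.mul ?_ hh
        refine ContinuousOn.aemeasurable ?_ measurableSet_Ioc
        exact (continuousOn_id.rpow_const fun x hx =>
          Or.inl (lt_of_lt_of_le ha hx.1.le).ne').mul continuousOn_id
      have heqon : ∀ x ∈ Ioc a 1,
          (fun s => s ^ (-2 - 2/(N:ℝ)) * s * (f s / s)) x
            = (fun s => s ^ (-2 - 2/(N:ℝ)) * f s) x := by
        intro x hx
        have hx0 : (0:ℝ) < x := lt_of_lt_of_le ha hx.1.le
        field_simp
      have hFm : AEStronglyMeasurable (fun s => s ^ (-2 - 2/(N:ℝ)) * f s)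
          (volume.restrict (Ioc a 1)) := by
        refine hG.aestronglyMeasurable.congr ?_
        exact (ae_restrict_iff' measurableSet_Ioc).2 (Filter.Eventually.of_forall heqon)
      refine Integrable.mono' (g := fun _ => a ^ (-1 - 2/(N:ℝ)) * (f 1 / 1))
        ((integrableOn_const_iff).2 (Or.inr measure_Ioc_lt_top)) hFm ?_
      refine (ae_restrict_iff' measurableSet_Ioc).2 (Filter.Eventually.of_forall ?_)
      intro s hs
      have hs0 : (0:ℝ) < s := lt_of_lt_of_le ha hs.1.le
      have hfs : 0 ≤ f s := hf s hs0
      have hnn : 0 ≤ s ^ (-2 - 2/(N:ℝ)) * f s :=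
        mul_nonneg (rpow_nonneg hs0.le _) hfs
      rw [Real.norm_of_nonneg hnn]
      have hsplit : s ^ (-2 - 2/(N:ℝ)) * f s = s ^ (-1 - 2/(N:ℝ)) * (f s / s) := by
        have : (-2 - 2/(N:ℝ)) = (-1 - 2/(N:ℝ)) + (-1) := by ring
        rw [this, Real.rpow_add hs0, Real.rpow_neg_one]
        field_simp
      rw [hsplit]
      have hb1 : s ^ (-1 - 2/(N:ℝ)) ≤ a ^ (-1 - 2/(N:ℝ)) :=
        Real.rpow_le_rpow_of_nonpos ha hs.1.le (by
          have : (0:ℝ) < 2 / (N:ℝ) := by positivity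
          linarith)
      have hb2 : f s / s ≤ f 1 / 1 := hmono hs0 (by norm_num) hs.2
      have hb2' : 0 ≤ f s / s := div_nonneg hfs hs0.le
      exact mul_le_mul hb1 hb2 hb2' (rpow_nonneg ha.le _)
  have hI : IntegrableOn
      (fun s => (q * a ^ q) * (s ^ (-2 - 2/(N:ℝ)) * f s)) (Ici a) :=
    hF.const_mul _
  refine hI.congr_fun ?_ measurableSet_Ici
  intro s hs
  have hs0 : 0 < s := lt_of_lt_of_le ha hs
  have habs : |a ^ q * (-q * s ^ (-q - 1))| = a ^ q * q * s ^ (-q - 1) := by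
    rw [abs_mul, abs_mul, abs_neg, abs_of_nonneg (rpow_nonneg ha.le q),
      abs_of_nonneg hq.le, abs_of_nonneg (rpow_nonneg hs0.le _), mul_assoc]
  have hkey := key s hs0
  have hexp : s ^ (-2 - 2/(N:ℝ)) = s ^ (-q - 1) * s⁻¹ := by
    have : (-2 - 2/(N:ℝ)) = (-q - 1) + (-1) := by rw [hqq]; ring
    rw [this, Real.rpow_add hs0, Real.rpow_neg_one]
  have hkey' : a * (a ^ q * s ^ (-q)) ^ e = s := hkey
  simp only [smul_eq_mul, habs, hkey, hexp]
  field_simp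
  rw [hkey', mul_assoc, hkey']
  ring
end

section
/- Let N ≥ 2, k > 0, and f : [0,∞) → [0,∞) with h(s) = f(s)/s nondecreasing and ∫₀^ε h(k C* τ^{-N/2}) dτ < ∞ for some ε > 0, where C* = (4π)^{-N/2}. Then for every R > 0: ∫₀^1 ∫_{B_R} f(k E(x,t)) dx dt < ∞, where E(x,t) = (4πt)^{-N/2} e^{-|x|²/(4t)} is the heat kernel. -/
/-!
Write `f s = h s * s` with `h s = f s / s` nondecreasing, and let `c t = k (4πt)^(-N/2)` be the
maximum of `k E(·, t)`. Then `f (k E(x, t)) ≤ h (c t) * k E(x, t)`, and since `E(·, t)` has total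
mass one, the double integral is at most `k ∫₀¹ h (c t) dt`, even over all of `ℝᴺ` instead of the
ball. The function `t ↦ h (c t)` is nonincreasing, so it is bounded on `[ε, 1]`, and it is
integrable on `(0, ε]` by hypothesis.
-/

open Real MeasureTheory Filter Set

noncomputable def heatKernel {V : Type*} [NormedAddCommGroup V] [InnerProductSpace ℝ V]
    (t : ℝ) (x : V) : ℝ :=
  (4 * π * t) ^ (-(Module.finrank ℝ V : ℝ) / 2) * exp (-‖x‖ ^ 2 / (4 * t))

section HeatKernel

variable {V : Type*} [NormedAddCommGroup V] [InnerProductSpace ℝ V] {t : ℝ}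

theorem heatKernel_pos (ht : 0 < t) (x : V) : 0 < heatKernel t x := by
  unfold heatKernel; positivity

theorem heatKernel_le (ht : 0 < t) (x : V) :
    heatKernel t x ≤ (4 * π * t) ^ (-(Module.finrank ℝ V : ℝ) / 2) := by
  refine mul_le_of_le_one_right (by positivity) (exp_le_one_iff.2 ?_)
  exact div_nonpos_of_nonpos_of_nonneg (neg_nonpos.2 (by positivity)) (by positivity)

theorem heatKernel_eq_mul_exp_neg_mul_sq_norm (t : ℝ) (x : V) :
    heatKernel t x = (4 * π * t) ^ (-(Module.finrank ℝ V : ℝ) / 2) *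
      exp (-(4 * t)⁻¹ * ‖x‖ ^ 2) := by
  rw [heatKernel]; ring_nf

variable [MeasurableSpace V] [BorelSpace V]

theorem measurable_heatKernel : Measurable fun p : ℝ × V => heatKernel p.1 p.2 := by
  unfold heatKernel; fun_prop

variable [FiniteDimensional ℝ V]

theorem integral_heatKernel (ht : 0 < t) : ∫ x : V, heatKernel t x = 1 := by
  simp_rw [heatKernel_eq_mul_exp_neg_mul_sq_norm]
  rw [integral_const_mul,
    GaussianFourier.integral_rexp_neg_mul_sq_norm (inv_pos.2 (by positivity : 0 < 4 * t)),
    div_inv_eq_mul, show π * (4 * t) = 4 * π * t by ring, ← rpow_add (by positivity),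
    neg_div, neg_add_cancel, rpow_zero]

theorem integrable_heatKernel (ht : 0 < t) : Integrable (heatKernel (V := V) t) :=
  Integrable.of_integral_ne_zero (by simp [integral_heatKernel ht])

end HeatKernel

theorem le_div_mul_of_monotoneOn_div {f : ℝ → ℝ} (hmono : MonotoneOn (fun s => f s / s) (Ioi 0))
    {u c : ℝ} (hu : 0 < u) (huc : u ≤ c) : f u ≤ f c / c * u :=
  calc f u = f u / u * u := (div_mul_cancel₀ _ hu.ne').symm
    _ ≤ f c / c * u := mul_le_mul_of_nonneg_right (hmono hu (hu.trans_le huc) huc) hu.le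

theorem aemeasurable_comp_of_monotoneOn_div {α : Type*} [MeasurableSpace α] {μ : Measure α}
    {f : ℝ → ℝ} (hmono : MonotoneOn (fun s => f s / s) (Ioi 0)) {Φ : α → ℝ} (hΦ : Measurable Φ)
    {s : Set α} (hs : MeasurableSet s) (hpos : ∀ a ∈ s, 0 < Φ a) :
    AEMeasurable (fun a => f (Φ a)) (μ.restrict s) := by
  -- `f` itself need not be measurable, but `f s = g (log s) * s` with `g` monotone on all of `ℝ`.
  have hg : Monotone fun u => f (exp u) / exp u := fun u v huv =>
    hmono (exp_pos u) (exp_pos v) (exp_le_exp.2 huv)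
  refine ((hg.measurable.comp (measurable_log.comp hΦ)).mul hΦ).aemeasurable.congr ?_
  filter_upwards [ae_restrict_mem hs] with a ha
  simp [exp_log (hpos a ha), div_mul_cancel₀ _ (hpos a ha).ne']

theorem integrableOn_Ioc_of_antitoneOn {H : ℝ → ℝ} {a ε b : ℝ} (hanti : AntitoneOn H (Ioc a b))
    (haε : a < ε) (hH : IntegrableOn H (Ioc a ε)) : IntegrableOn H (Ioc a b) := by
  have hcompact : IntegrableOn H (Icc ε b) :=
    (hanti.mono fun x hx => ⟨haε.trans_le hx.1, hx.2⟩).integrableOn_isCompact isCompact_Icc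
  refine (hH.union hcompact).mono_set fun x hx => ?_
  rcases le_or_gt x ε with h | h
  exacts [Or.inl ⟨hx.1, h⟩, Or.inr ⟨h.le, hx.2⟩]

theorem integrable_prod_mul_of_integral_norm_le {α β : Type*} [MeasurableSpace α]
    [MeasurableSpace β] {μ : Measure α} {ν : Measure β} [SFinite ν] {H : α → ℝ}
    {K : α × β → ℝ} (hH : Integrable H μ) (hK : AEStronglyMeasurable K (μ.prod ν))
    (hKint : ∀ᵐ a ∂μ, Integrable (fun b => K (a, b)) ν) {c : ℝ}
    (hKc : ∀ᵐ a ∂μ, ∫ b, ‖K (a, b)‖ ∂ν ≤ c) :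
    Integrable (fun p => H p.1 * K p) (μ.prod ν) := by
  have hmeas : AEStronglyMeasurable (fun p => H p.1 * K p) (μ.prod ν) :=
    hH.aestronglyMeasurable.comp_fst.mul hK
  refine (integrable_prod_iff hmeas).2 ⟨?_, ?_⟩
  · filter_upwards [hKint] with a ha using ha.const_mul (H a)
  · refine (hH.norm.mul_const c).mono' hmeas.norm.integral_prod_right' ?_
    filter_upwards [hKc] with a ha
    simp_rw [norm_mul, integral_const_mul]
    rw [Real.norm_of_nonneg (by positivity)]
    exact mul_le_mul_of_nonneg_left ha (norm_nonneg _)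

theorem integrableOn_comp_mul_heatKernel {V : Type*} [NormedAddCommGroup V]
    [InnerProductSpace ℝ V] [FiniteDimensional ℝ V] [MeasurableSpace V] [BorelSpace V]
    {k : ℝ} (hk : 0 < k) {f : ℝ → ℝ} (hf : ∀ s ∈ Ioi (0:ℝ), 0 ≤ f s)
    (hmono : MonotoneOn (fun s => f s / s) (Ioi 0)) {s : Set ℝ} (hs : MeasurableSet s)
    (hs0 : s ⊆ Ioi 0)
    (hint : IntegrableOn (fun t => f (k * (4 * π * t) ^ (-(Module.finrank ℝ V : ℝ) / 2))
      / (k * (4 * π * t) ^ (-(Module.finrank ℝ V : ℝ) / 2))) s) :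
    IntegrableOn (fun p : ℝ × V => f (k * heatKernel p.1 p.2)) (s ×ˢ univ) := by
  have hK : Measurable fun p : ℝ × V => k * heatKernel p.1 p.2 := measurable_heatKernel.const_mul k
  have hpos : ∀ p ∈ s ×ˢ (univ : Set V), 0 < k * heatKernel p.1 p.2 := fun p hp =>
    mul_pos hk (heatKernel_pos (hs0 hp.1) _)
  have hdom : IntegrableOn (fun p : ℝ × V =>
      f (k * (4 * π * p.1) ^ (-(Module.finrank ℝ V : ℝ) / 2))
        / (k * (4 * π * p.1) ^ (-(Module.finrank ℝ V : ℝ) / 2)) * (k * heatKernel p.1 p.2))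
      (s ×ˢ univ) := by
    rw [IntegrableOn, Measure.volume_eq_prod, ← Measure.prod_restrict, Measure.restrict_univ]
    refine integrable_prod_mul_of_integral_norm_le hint hK.aestronglyMeasurable ?_ (c := k) ?_
    · filter_upwards [ae_restrict_mem hs] with t ht using
        (integrable_heatKernel (hs0 ht)).const_mul k
    · filter_upwards [ae_restrict_mem hs] with t ht
      simp_rw [norm_mul, Real.norm_of_nonneg hk.le,
        Real.norm_of_nonneg (heatKernel_pos (hs0 ht) _).le, integral_const_mul,
        integral_heatKernel (hs0 ht), mul_one, le_refl]
  refine hdom.mono' (aemeasurable_comp_of_monotoneOn_div hmono hK (hs.prod .univ)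
    hpos).aestronglyMeasurable ?_
  filter_upwards [ae_restrict_mem (hs.prod .univ)] with p hp
  rw [Real.norm_of_nonneg (hf _ (hpos p hp))]
  exact le_div_mul_of_monotoneOn_div hmono (hpos p hp)
    (mul_le_mul_of_nonneg_left (heatKernel_le (hs0 hp.1) _) hk.le)

theorem heat_kernel_absorption_integrable_general (N : ℕ) (k : ℝ) (hk : 0 < k)
    (f : ℝ → ℝ) (hf : ∀ s ∈ Ici (0:ℝ), 0 ≤ f s)
    (hmono : MonotoneOn (fun s => f s / s) (Ioi 0))
    (ε : ℝ) (hε : 0 < ε)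
    (hint : IntegrableOn
      (fun τ => f (k * (4 * π) ^ (-(N:ℝ)/2) * τ ^ (-(N:ℝ)/2))
        / (k * (4 * π) ^ (-(N:ℝ)/2) * τ ^ (-(N:ℝ)/2)))
      (Ioc 0 ε)) :
    ∀ R : ℝ, 0 < R → IntegrableOn
      (fun p : ℝ × EuclideanSpace ℝ (Fin N) =>
        f (k * (4 * π * p.1) ^ (-(N:ℝ)/2) * Real.exp (-‖p.2‖^2 / (4 * p.1))))
      ((Ioc (0:ℝ) 1) ×ˢ Metric.ball (0 : EuclideanSpace ℝ (Fin N)) R) := by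
  intro R _
  have hpeak_anti : AntitoneOn (fun t : ℝ => k * (4 * π * t) ^ (-(N:ℝ)/2)) (Ioi 0) :=
    fun a ha b _ hab => mul_le_mul_of_nonneg_left (rpow_le_rpow_of_nonpos
      (by have := ha.out; positivity) (by gcongr) (by simp only [neg_div, neg_nonpos]; positivity))
      hk.le
  have hpeak_pos : MapsTo (fun t : ℝ => k * (4 * π * t) ^ (-(N:ℝ)/2)) (Ioi 0) (Ioi 0) :=
    fun t ht => by have := ht.out; simp only [mem_Ioi]; positivity
  have hpeak : IntegrableOn (fun t => f (k * (4 * π * t) ^ (-(N:ℝ)/2))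
      / (k * (4 * π * t) ^ (-(N:ℝ)/2))) (Ioc 0 1) := integrableOn_Ioc_of_antitoneOn
    ((hmono.comp_AntitoneOn hpeak_anti hpeak_pos).mono Ioc_subset_Ioi_self) hε <|
    hint.congr_fun (fun t ht => by rw [mul_rpow (by positivity) ht.1.le, ← mul_assoc])
      measurableSet_Ioc
  have hwhole := integrableOn_comp_mul_heatKernel (V := EuclideanSpace ℝ (Fin N)) hk
    (fun s hs => hf s (Ioi_subset_Ici_self hs)) hmono measurableSet_Ioc Ioc_subset_Ioi_self
    (by simpa only [finrank_euclideanSpace_fin] using hpeak)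
  refine (hwhole.mono_set (prod_mono subset_rfl (subset_univ _))).congr_fun (fun p _ => ?_)
    (measurableSet_Ioc.prod measurableSet_ball)
  simp only [heatKernel, finrank_euclideanSpace_fin, mul_assoc]

theorem heat_kernel_absorption_integrable (N : ℕ) (hN : 2 ≤ N) (k : ℝ) (hk : 0 < k)
    (f : ℝ → ℝ) (hf : ∀ s ∈ Ici (0:ℝ), 0 ≤ f s)
    (hmono : MonotoneOn (fun s => f s / s) (Ioi 0))
    (ε : ℝ) (hε : 0 < ε)
    (hint : IntegrableOn
      (fun τ => f (k * (4 * π) ^ (-(N:ℝ)/2) * τ ^ (-(N:ℝ)/2))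
        / (k * (4 * π) ^ (-(N:ℝ)/2) * τ ^ (-(N:ℝ)/2)))
      (Ioc 0 ε)) :
    ∀ R : ℝ, 0 < R → IntegrableOn
      (fun p : ℝ × EuclideanSpace ℝ (Fin N) =>
        f (k * (4 * π * p.1) ^ (-(N:ℝ)/2) * Real.exp (-‖p.2‖^2 / (4 * p.1))))
      ((Ioc (0:ℝ) 1) ×ˢ Metric.ball (0 : EuclideanSpace ℝ (Fin N)) R) :=
  heat_kernel_absorption_integrable_general N k hk f hf hmono ε hε hint
end
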